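/- Let V be a finite-dimensional real inner product space, S ⊆ V a subspace, and R : ℝ → (V →ₗ V) a continuous family of linear operators such that R(t) maps S into S and the orthogonal complement S⊥ into S⊥ for every t. If Y : ℝ → V satisfies the second-order linear ODE Y''(t) + R(t) Y(t) = 0 with Y(0) ∈ S and Y'(0) ∈ S, then Y(t) ∈ S for all t. -/

import Mathlib

/-! Let `P` be the orthogonal projection onto `S`. Since `R t` preserves both `S` and `Sᗮ`, it
commutes with `P`, so `Z = Y - P Y` solves the same Jacobi equation `Z'' + R Z = 0`. Its initial
data vanish because `Y 0, Y' 0 ∈ S`, hence `Z ≡ 0` by uniqueness for linear ODEs with continuous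
coefficients, i.e. `Y t = P (Y t) ∈ S`. -/

open Set

theorem linear_ODE_solution_unique {E : Type*} [NormedAddCommGroup E] [NormedSpace ℝ E]
    {A : ℝ → E →L[ℝ] E} (hA : Continuous A) {f g : ℝ → E}
    (hf : ∀ t, HasDerivAt f (A t (f t)) t) (hg : ∀ t, HasDerivAt g (A t (g t)) t)
    {t₀ : ℝ} (heq : f t₀ = g t₀) : f = g := by
  ext t
  obtain ⟨a, b, ht, ht₀⟩ : ∃ a b, t ∈ Ioo a b ∧ t₀ ∈ Ioo a b := by
    use min t t₀ - 1, max t t₀ + 1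
    grind
  obtain ⟨C, hC⟩ := (isCompact_Icc (a := a) (b := b)).exists_bound_of_continuousOn hA.continuousOn
  have hlip : ∀ s ∈ Ioo a b, LipschitzOnWith C.toNNReal (A s) univ := fun s hs =>
    have hnorm : ‖A s‖₊ ≤ C.toNNReal :=
      norm_toNNReal (a := A s) ▸ Real.toNNReal_le_toNNReal (hC s (Ioo_subset_Icc_self hs))
    ((A s).lipschitz.weaken hnorm).lipschitzOnWith
  exact ODE_solution_unique_of_mem_Ioo hlip ht₀ (fun s _ => ⟨hf s, mem_univ _⟩)
    (fun s _ => ⟨hg s, mem_univ _⟩) heq ht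

theorem second_order_linear_ODE_eq_zero {E : Type*} [NormedAddCommGroup E] [NormedSpace ℝ E]
    {A : ℝ → E →L[ℝ] E} (hA : Continuous A) {f f' : ℝ → E}
    (hf : ∀ t, HasDerivAt f (f' t) t) (hf' : ∀ t, HasDerivAt f' (-A t (f t)) t)
    {t₀ : ℝ} (h₀ : f t₀ = 0) (h₀' : f' t₀ = 0) : f = 0 := by
  let B : ℝ → E × E →L[ℝ] E × E := fun t =>
    (ContinuousLinearMap.snd ℝ E E).prod (-(A t).comp (ContinuousLinearMap.fst ℝ E E))
  have hB : Continuous B :=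
    (ContinuousLinearMap.prodₗᵢ ℝ).continuous.comp
      (continuous_const.prodMk (hA.clm_comp continuous_const).neg)
  have hsol := linear_ODE_solution_unique hB (f := fun t => (f t, f' t)) (g := 0)
    (fun t => (hf t).prodMk (hf' t)) (fun t => by simp)
    (t₀ := t₀) (by simp [h₀, h₀'])
  funext t
  exact congrArg Prod.fst (congrFun hsol t)

theorem Submodule.starProjection_comm_of_mapsTo {E : Type*} [NormedAddCommGroup E]
    [InnerProductSpace ℝ E] (K : Submodule ℝ E) [K.HasOrthogonalProjection] (T : E →ₗ[ℝ] E)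
    (hK : MapsTo T K K) (hKperp : MapsTo T Kᗮ Kᗮ) (v : E) :
    K.starProjection (T v) = T (K.starProjection v) :=
  K.eq_starProjection_of_mem_orthogonal (hK (K.starProjection_apply_mem v))
    (by simpa only [map_sub, SetLike.mem_coe] using hKperp (K.sub_starProjection_mem_orthogonal v))

theorem stmt8 (V : Type*) [NormedAddCommGroup V] [InnerProductSpace ℝ V]
    [FiniteDimensional ℝ V]
    (S : Submodule ℝ V) (R : ℝ → V →ₗ[ℝ] V)
    (hRcont : ∀ v : V, Continuous fun t => R t v)
    (hRS : ∀ t : ℝ, ∀ v ∈ S, R t v ∈ S)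
    (hRSperp : ∀ t : ℝ, ∀ v ∈ Sᗮ, R t v ∈ Sᗮ)
    (Y Y' : ℝ → V)
    (hY : ∀ t, HasDerivAt Y (Y' t) t)
    (hY' : ∀ t, HasDerivAt Y' (-(R t (Y t))) t)
    (h0 : Y 0 ∈ S) (h0' : Y' 0 ∈ S) :
    ∀ t : ℝ, Y t ∈ S := by
  let A : ℝ → V →L[ℝ] V := fun t => (R t).toContinuousLinearMap
  have hA : Continuous A := continuous_clm_apply.mpr hRcont
  let P := S.starProjection
  have hPR (t : ℝ) (v : V) : P (R t v) = R t (P v) :=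
    S.starProjection_comm_of_mapsTo (R t) (hRS t) (hRSperp t) v
  let Z : ℝ → V := fun t => Y t - P (Y t)
  let Z' : ℝ → V := fun t => Y' t - P (Y' t)
  have hZ (t : ℝ) : HasDerivAt Z (Z' t) t :=
    (hY t).sub (P.hasFDerivAt.comp_hasDerivAt t (hY t))
  have hZ' (t : ℝ) : HasDerivAt Z' (-A t (Z t)) t := by
    refine ((hY' t).sub (P.hasFDerivAt.comp_hasDerivAt t (hY' t))).congr_deriv ?_
    change _ = -R t (Y t - P (Y t))
    rw [map_neg, hPR, map_sub]
    abel
  have hZ0 : Z = 0 := second_order_linear_ODE_eq_zero hA hZ hZ' (t₀ := 0)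
    (by simp [Z, P, S.starProjection_eq_self_iff.mpr h0])
    (by simp [Z', P, S.starProjection_eq_self_iff.mpr h0'])
  intro t
  exact S.starProjection_eq_self_iff.mp (sub_eq_zero.mp (congrFun hZ0 t)).symm
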